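/- Assume E(Y) = 0, Var(Y) = V ≠ 0, σ² = Var(V^{-1}(Y Y^u − S^{u}_{Cl} Y²)) > 0, fix t ∈ ℝ and N ≥ 1, and suppose Σ_{i=1}^N Y_i² > 0. Then, setting Δ_{N,j} = σ^{-1}[Y_j Y^u_j V − (C_u + tσV/√N) Y_j²] for j = 1,…,N, the event A_t = {(√N/σ)(S̃^{u}_{N,Cl} − S^{u}_{Cl}) ≤ t} coincides with {N^{-1/2} Σ_{j=1}^N Δ_{N,j} ≤ 0}, and, provided Var(Δ_N) > 0, also with {√N (Δ̄_{N} − E(Δ_N))/√(Var Δ_N) ≤ t/√(1 + tν_N/(σ√N V²))}, where Δ̄_N = N^{-1}Σ_j Δ_{N,j} and ν_N = (tσ/√N + 2S^{u}_{Cl}) Var(Y²) − 2 Cov(Y Y^u, Y²). -/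

import Mathlib

/-!
On `{Σ Y_i² > 0}` the estimator is the ratio `P / Q` of `P = Σ Y_i Y_i^u` and `Q = Σ Y_i²`, so
`A_t` is the linear event `P - (S + tσ/√N) Q ≤ 0`; multiplying by `V/σ > 0` and using `C = S V`
turns it into `Σ_j Δ_{N,j} ≤ 0`. For the normalized form, centering gives `E Δ_N = -t V² / √N`,
and expanding `Var (Y Y^u - (S + b) Y²)` around `b = 0`, with `b = tσ/√N`, gives
`Var Δ_N = V⁴ (1 + t ν_N / (σ √N V²))`. Substituting both, the normalized inequality reads
`Σ_j Δ_{N,j} / √N + t V² ≤ t V²`, which is again `Σ_j Δ_{N,j} ≤ 0`.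
-/

open MeasureTheory ProbabilityTheory Filter Finset
open scoped NNReal ENNReal Topology

noncomputable section

namespace SobolPaper

variable {p : ℕ} {𝒳 : Fin p → Type*} [∀ i, MeasurableSpace (𝒳 i)]

/-- The pick-freeze probability space: two independent copies of the input vector
`X = (X₁,…,X_p)` (with independent coordinates) are modeled canonically as the two
canonical projections of the product of two copies of the product measure. -/
def pfMeasure (ν : ∀ i, Measure (𝒳 i)) : Measure ((∀ i, 𝒳 i) × (∀ i, 𝒳 i)) :=
  (Measure.pi ν).prod (Measure.pi ν)

instance (ν : ∀ i, Measure (𝒳 i)) [∀ i, IsProbabilityMeasure (ν i)] :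
    IsProbabilityMeasure (pfMeasure ν) := by
  unfold pfMeasure; infer_instance

/-- The output `Y = f(X)`. -/
def Yout (f : (∀ i, 𝒳 i) → ℝ) (ω : (∀ i, 𝒳 i) × (∀ i, 𝒳 i)) : ℝ := f ω.1

/-- The pick-freeze input `X^u`: coordinates in `u` are frozen (taken from `X`),
the others are resampled (taken from the independent copy `X'`). -/
def Xpf (u : Finset (Fin p)) (ω : (∀ i, 𝒳 i) × (∀ i, 𝒳 i)) : ∀ i, 𝒳 i :=
  fun i => if i ∈ u then ω.1 i else ω.2 i

/-- The pick-freeze replication `Y^u = f(X^u)`. -/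
def Ypf (f : (∀ i, 𝒳 i) → ℝ) (u : Finset (Fin p)) (ω : (∀ i, 𝒳 i) × (∀ i, 𝒳 i)) : ℝ :=
  f (Xpf u ω)

/-- Covariance of two real random variables. -/
def cov {α : Type*} [MeasurableSpace α] (μ : Measure α) (g h : α → ℝ) : ℝ :=
  ∫ a, g a * h a ∂μ - (∫ a, g a ∂μ) * ∫ a, h a ∂μ

/-- The closed Sobol index `S^u_Cl = Cov(Y, Y^u) / Var(Y)`. -/
def SCl (ν : ∀ i, Measure (𝒳 i)) (f : (∀ i, 𝒳 i) → ℝ) (u : Finset (Fin p)) : ℝ :=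
  cov (pfMeasure ν) (Yout f) (Ypf f u) / variance (Yout f) (pfMeasure ν)

/-- The standard Gaussian cumulative distribution function `Φ`. -/
def Phi (z : ℝ) : ℝ := cdf (gaussianReal 0 1) z

/-- The estimator `S̃^u_{N,Cl}` for the centered case, built from a sample
`W i ω = (Y_i(ω), Y_i^u(ω))`. -/
def StildeN {Ω' : Type*} (W : ℕ → Ω' → ℝ × ℝ) (N : ℕ) (ω : Ω') : ℝ :=
  ((∑ i ∈ Finset.range N, (W i ω).1 * (W i ω).2) / N) /
    ((∑ i ∈ Finset.range N, (W i ω).1 ^ 2) / N)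

variable {p : ℕ} {𝒳 : Fin p → Type*} [∀ i, MeasurableSpace (𝒳 i)]

/-- `σ² = Var(V⁻¹ (Y Y^u − S^u_Cl Y²))` (asymptotic variance, centered case). -/
def sigmaSq (ν : ∀ i, Measure (𝒳 i)) (f : (∀ i, 𝒳 i) → ℝ) (u : Finset (Fin p)) : ℝ :=
  variance (fun ω => (variance (Yout f) (pfMeasure ν))⁻¹ *
    (Yout f ω * Ypf f u ω - SCl ν f u * Yout f ω ^ 2)) (pfMeasure ν)

/-- `Δ_N = σ⁻¹ V [Y Y^u − (S^u_Cl + tσ/√N) Y²]`. -/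
def DeltaN (ν : ∀ i, Measure (𝒳 i)) (f : (∀ i, 𝒳 i) → ℝ) (u : Finset (Fin p))
    (N : ℕ) (t : ℝ) (ω : (∀ i, 𝒳 i) × (∀ i, 𝒳 i)) : ℝ :=
  (Real.sqrt (sigmaSq ν f u))⁻¹ * variance (Yout f) (pfMeasure ν) *
    (Yout f ω * Ypf f u ω -
      (SCl ν f u + t * Real.sqrt (sigmaSq ν f u) / Real.sqrt N) * Yout f ω ^ 2)

/-- `μ_{3,N} = E |(Δ_N − E Δ_N)/√(Var Δ_N)|³`. -/
def mu3N (ν : ∀ i, Measure (𝒳 i)) (f : (∀ i, 𝒳 i) → ℝ) (u : Finset (Fin p))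
    (N : ℕ) (t : ℝ) : ℝ :=
  ∫ ω, |(DeltaN ν f u N t ω - ∫ ω', DeltaN ν f u N t ω' ∂(pfMeasure ν)) /
      Real.sqrt (variance (DeltaN ν f u N t) (pfMeasure ν))| ^ 3 ∂(pfMeasure ν)

/-- `ν_N = (tσ/√N + 2 S^u_Cl) Var(Y²) − 2 Cov(Y Y^u, Y²)`. -/
def nuN (ν : ∀ i, Measure (𝒳 i)) (f : (∀ i, 𝒳 i) → ℝ) (u : Finset (Fin p))
    (N : ℕ) (t : ℝ) : ℝ :=
  (t * Real.sqrt (sigmaSq ν f u) / Real.sqrt N + 2 * SCl ν f u) *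
      variance (fun ω => Yout f ω ^ 2) (pfMeasure ν) -
    2 * cov (pfMeasure ν) (fun ω => Yout f ω * Ypf f u ω) (fun ω => Yout f ω ^ 2)

/-- The right-hand side `B(t)` of the Berry–Esseen inequality for the centered estimator. -/
def Bbound (ν : ∀ i, Measure (𝒳 i)) (f : (∀ i, 𝒳 i) → ℝ) (u : Finset (Fin p))
    (κ : ℝ) (N : ℕ) (t : ℝ) : ℝ :=
  κ * mu3N ν f u N t / Real.sqrt N +
    |Phi t - Phi (t / Real.sqrt (1 + t * nuN ν f u N t /
      (Real.sqrt (sigmaSq ν f u) * Real.sqrt N * (variance (Yout f) (pfMeasure ν)) ^ 2)))|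

lemma mul_nonpos_iff_of_pos_left {R : Type*} [Semiring R] [LinearOrder R] [IsStrictOrderedRing R]
    {a b : R} (ha : 0 < a) : a * b ≤ 0 ↔ b ≤ 0 :=
  ⟨fun h => nonpos_of_mul_nonpos_right h ha, mul_nonpos_of_nonneg_of_nonpos ha.le⟩

lemma sqrt_div_mul_sub_le_iff {n σ S t P Q : ℝ} (hn : 0 < n) (hσ : 0 < σ) (hQ : 0 < Q) :
    Real.sqrt n / σ * (P / Q - S) ≤ t ↔ P - (S + t * σ / Real.sqrt n) * Q ≤ 0 := by
  have hsn : 0 < Real.sqrt n := Real.sqrt_pos.2 hn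
  rw [← le_div_iff₀' (div_pos hsn hσ), sub_le_iff_le_add, div_le_iff₀ hQ, sub_nonpos,
    div_div_eq_mul_div, add_comm]

lemma sum_inv_mul_sub_mul_eq {ι : Type*} (x y : ι → ℝ) (s : Finset ι) (σ V a : ℝ) :
    ∑ j ∈ s, σ⁻¹ * (x j * y j * V - a * V * x j ^ 2) =
      σ⁻¹ * V * (∑ j ∈ s, x j * y j - a * ∑ j ∈ s, x j ^ 2) := by
  rw [mul_sub, Finset.mul_sum, Finset.mul_sum, Finset.mul_sum, ← Finset.sum_sub_distrib]
  exact Finset.sum_congr rfl fun _ _ => by ring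

-- The shape of the normalized event once `E Δ_N = -t V² / √N` and `Var Δ_N = V⁴ w` are known.
lemma normalized_le_iff {n c D V w t : ℝ} (hn : 0 < n) (hc : 0 < c) (hV : V ≠ 0)
    (hw : 0 < w) :
    Real.sqrt n * ((c * D / n - -(t * V ^ 2 / Real.sqrt n)) / Real.sqrt (V ^ 4 * w)) ≤
        t / Real.sqrt w ↔ D ≤ 0 := by
  have hsn : 0 < Real.sqrt n := Real.sqrt_pos.2 hn
  have hsw : 0 < Real.sqrt w := Real.sqrt_pos.2 hw
  have hsqrt : Real.sqrt (V ^ 4 * w) = V ^ 2 * Real.sqrt w := by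
    rw [Real.sqrt_mul (by positivity), show V ^ 4 = (V ^ 2) ^ 2 by ring,
      Real.sqrt_sq (sq_nonneg V)]
  have hlhs : Real.sqrt n * ((c * D / n - -(t * V ^ 2 / Real.sqrt n)) / Real.sqrt (V ^ 4 * w)) =
      c / (Real.sqrt n * V ^ 2 * Real.sqrt w) * D + t / Real.sqrt w := by
    rw [hsqrt]
    field_simp
    linear_combination (c * D) * Real.mul_self_sqrt hn.le
  have hcoef : 0 < c / (Real.sqrt n * V ^ 2 * Real.sqrt w) := by positivity
  rw [hlhs, add_le_iff_nonpos_left, mul_nonpos_iff_of_pos_left hcoef]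

lemma StildeN_eq_div {Ω' : Type*} (W : ℕ → Ω' → ℝ × ℝ) {N : ℕ} (hN : N ≠ 0) (ω : Ω') :
    StildeN W N ω =
      (∑ i ∈ Finset.range N, (W i ω).1 * (W i ω).2) / ∑ i ∈ Finset.range N, (W i ω).1 ^ 2 :=
  div_div_div_cancel_right₀ (Nat.cast_ne_zero.2 hN) _ _

lemma measurable_Xpf (u : Finset (Fin p)) : Measurable (Xpf (𝒳 := 𝒳) u) := by
  refine measurable_pi_lambda _ fun i => ?_
  by_cases hi : i ∈ u <;> simp only [Xpf, hi, if_true, if_false] <;> fun_prop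

lemma map_Xpf_pfMeasure (ν : ∀ i, Measure (𝒳 i)) [∀ i, IsProbabilityMeasure (ν i)]
    (u : Finset (Fin p)) :
    (pfMeasure ν).map (Xpf u) = Measure.pi ν := by
  refine (Measure.pi_eq fun s hs => ?_).symm
  have hpre : Xpf u ⁻¹' Set.univ.pi s =
      Set.univ.pi (fun i => if i ∈ u then s i else Set.univ) ×ˢ
        Set.univ.pi (fun i => if i ∈ u then Set.univ else s i) := by
    ext ω
    simp only [Set.mem_preimage, Set.mem_pi, Set.mem_univ, true_imp_iff, Set.mem_prod,
      ← forall_and, Xpf]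
    refine forall_congr' fun i => ?_
    split_ifs <;> simp
  rw [Measure.map_apply (measurable_Xpf u) (.univ_pi hs), hpre, pfMeasure, Measure.prod_prod,
    Measure.pi_pi, Measure.pi_pi, ← Finset.prod_mul_distrib]
  refine Finset.prod_congr rfl fun i _ => ?_
  split_ifs <;> simp

lemma memLp_Ypf {ν : ∀ i, Measure (𝒳 i)} [∀ i, IsProbabilityMeasure (ν i)]
    {f : (∀ i, 𝒳 i) → ℝ} (hf : Measurable f) (u : Finset (Fin p))
    (hY2 : MemLp (Yout f) 2 (pfMeasure ν)) :
    MemLp (Ypf f u) 2 (pfMeasure ν) := by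
  have hfst : (pfMeasure ν).map Prod.fst = Measure.pi ν := by simp [pfMeasure]
  have hf2 : MemLp f 2 (Measure.pi ν) := by
    rw [← hfst]
    exact (memLp_map_measure_iff hf.aestronglyMeasurable measurable_fst.aemeasurable).2 hY2
  rw [← map_Xpf_pfMeasure ν u] at hf2
  exact (memLp_map_measure_iff hf.aestronglyMeasurable (measurable_Xpf u).aemeasurable).1 hf2

section

variable {Ω : Type*} [MeasurableSpace Ω] {μ : Measure Ω} [IsProbabilityMeasure μ]

lemma cov_eq_covariance {g h : Ω → ℝ} (hg : MemLp g 2 μ) (hh : MemLp h 2 μ) :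
    cov μ g h = cov[g, h; μ] := by
  rw [covariance_eq_sub hg hh, cov]
  rfl

-- For `b ≠ 0` the hypotheses put `g` and `h` in `L²`; for `b = 0` the junk values of
-- `variance h μ` and `cov μ g h` are multiplied by `0`.
lemma variance_sub_add_mul {g h : Ω → ℝ} {s b : ℝ}
    (hs : MemLp (fun ω => g ω - s * h ω) 2 μ) (hsb : MemLp (fun ω => g ω - (s + b) * h ω) 2 μ) :
    variance (fun ω => g ω - (s + b) * h ω) μ =
      variance (fun ω => g ω - s * h ω) μ + b * ((b + 2 * s) * variance h μ - 2 * cov μ g h) := by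
  rcases eq_or_ne b 0 with rfl | hb
  · simp
  have hh : MemLp h 2 μ := by
    have hh_eq : h = fun ω => b⁻¹ * ((g ω - s * h ω) - (g ω - (s + b) * h ω)) := by
      ext ω
      field_simp
      ring
    rw [hh_eq]
    exact (hs.sub hsb).const_mul _
  have hg : MemLp g 2 μ := by
    have hg_eq : g = fun ω => (g ω - s * h ω) + s * h ω := by
      ext ω
      ring
    rw [hg_eq]
    exact hs.add (hh.const_mul s)
  rw [variance_fun_sub hg (hh.const_mul _), variance_fun_sub hg (hh.const_mul _),
    variance_const_mul, variance_const_mul, covariance_const_mul_right,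
    covariance_const_mul_right, cov_eq_covariance hg hh]
  ring

end

section

variable {ν : ∀ i, Measure (𝒳 i)} {f : (∀ i, 𝒳 i) → ℝ} {u : Finset (Fin p)}

lemma integral_Yout_sq [∀ i, IsProbabilityMeasure (ν i)] (hY2 : MemLp (Yout f) 2 (pfMeasure ν))
    (hcent : ∫ ω, Yout f ω ∂(pfMeasure ν) = 0) :
    ∫ ω, Yout f ω ^ 2 ∂(pfMeasure ν) = variance (Yout f) (pfMeasure ν) := by
  rw [variance_eq_sub hY2, hcent]
  simp

lemma integral_Yout_mul_Ypf (hcent : ∫ ω, Yout f ω ∂(pfMeasure ν) = 0) :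
    ∫ ω, Yout f ω * Ypf f u ω ∂(pfMeasure ν) = cov (pfMeasure ν) (Yout f) (Ypf f u) := by
  simp [cov, hcent]

lemma cov_Yout_Ypf_eq (hVar : variance (Yout f) (pfMeasure ν) ≠ 0) :
    cov (pfMeasure ν) (Yout f) (Ypf f u) = SCl ν f u * variance (Yout f) (pfMeasure ν) :=
  (div_mul_cancel₀ _ hVar).symm

lemma integral_DeltaN [∀ i, IsProbabilityMeasure (ν i)] (hf : Measurable f)
    (hY2 : MemLp (Yout f) 2 (pfMeasure ν))
    (hVar : variance (Yout f) (pfMeasure ν) ≠ 0) (hcent : ∫ ω, Yout f ω ∂(pfMeasure ν) = 0)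
    (hσpos : 0 < sigmaSq ν f u) (N : ℕ) (t : ℝ) :
    ∫ ω, DeltaN ν f u N t ω ∂(pfMeasure ν) =
      -(t * variance (Yout f) (pfMeasure ν) ^ 2 / Real.sqrt N) := by
  have hg : Integrable (fun ω => Yout f ω * Ypf f u ω) (pfMeasure ν) :=
    hY2.integrable_mul (memLp_Ypf hf u hY2)
  have hh : Integrable (fun ω => Yout f ω ^ 2) (pfMeasure ν) := hY2.integrable_sq
  have hσ : Real.sqrt (sigmaSq ν f u) ≠ 0 := (Real.sqrt_pos.2 hσpos).ne'
  simp only [DeltaN]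
  rw [integral_const_mul, integral_sub hg (hh.const_mul _), integral_const_mul,
    integral_Yout_mul_Ypf hcent, integral_Yout_sq hY2 hcent, cov_Yout_Ypf_eq hVar]
  field_simp
  ring

lemma variance_DeltaN [∀ i, IsProbabilityMeasure (ν i)] (hf : Measurable f)
    (hVar : variance (Yout f) (pfMeasure ν) ≠ 0) (hσpos : 0 < sigmaSq ν f u) (N : ℕ) (t : ℝ)
    (hΔ : 0 < variance (DeltaN ν f u N t) (pfMeasure ν)) :
    variance (DeltaN ν f u N t) (pfMeasure ν) =
      variance (Yout f) (pfMeasure ν) ^ 4 * (1 + t * nuN ν f u N t /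
        (Real.sqrt (sigmaSq ν f u) * Real.sqrt N * variance (Yout f) (pfMeasure ν) ^ 2)) := by
  set μ := pfMeasure ν
  set V := variance (Yout f) μ
  set S := SCl ν f u
  set σ := Real.sqrt (sigmaSq ν f u)
  set b := t * σ / Real.sqrt N
  have hσ : σ ≠ 0 := (Real.sqrt_pos.2 hσpos).ne'
  have hY : Measurable (Yout f) := hf.comp measurable_fst
  have hYu : Measurable (Ypf f u) := hf.comp (measurable_Xpf u)
  have hmeas (r : ℝ) :
      AEStronglyMeasurable (fun ω => Yout f ω * Ypf f u ω - r * Yout f ω ^ 2) μ :=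
    ((hY.mul hYu).sub ((hY.pow_const 2).const_mul r)).aestronglyMeasurable
  have hvarS :
      variance (fun ω => Yout f ω * Ypf f u ω - S * Yout f ω ^ 2) μ = V ^ 2 * σ ^ 2 := by
    rw [Real.sq_sqrt hσpos.le, sigmaSq, variance_const_mul, inv_pow,
      mul_inv_cancel_left₀ (pow_ne_zero 2 hVar)]
  have hvarΔ : variance (DeltaN ν f u N t) μ = (σ⁻¹ * V) ^ 2 *
      variance (fun ω => Yout f ω * Ypf f u ω - (S + b) * Yout f ω ^ 2) μ :=
    variance_const_mul _ _ _
  -- `Y Y^u` and `Y²` need not be square integrable; the combinations are, because `variance`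
  -- vanishes off `L²`.
  have hLpS : MemLp (fun ω => Yout f ω * Ypf f u ω - S * Yout f ω ^ 2) 2 μ :=
    memLp_two_of_variance_ne_zero (hmeas S) (by rw [hvarS]; positivity)
  have hLpSb : MemLp (fun ω => Yout f ω * Ypf f u ω - (S + b) * Yout f ω ^ 2) 2 μ :=
    memLp_two_of_variance_ne_zero (hmeas (S + b)) fun h0 => by simp [hvarΔ, h0] at hΔ
  rw [hvarΔ, variance_sub_add_mul hLpS hLpSb, hvarS, nuN]
  field_simp
  ring

end

theorem statement17_general
    {p : ℕ} {𝒳 : Fin p → Type*} [∀ i, MeasurableSpace (𝒳 i)]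
    (ν : ∀ i, Measure (𝒳 i)) [∀ i, IsProbabilityMeasure (ν i)]
    (f : (∀ i, 𝒳 i) → ℝ) (hf : Measurable f)
    (hY2 : MemLp (Yout f) 2 (pfMeasure ν))
    (hVar : variance (Yout f) (pfMeasure ν) ≠ 0)
    (u : Finset (Fin p))
    {Ω' : Type*}
    (W : ℕ → Ω' → ℝ × ℝ)
    (hcent : ∫ ω, Yout f ω ∂(pfMeasure ν) = 0)
    (hσpos : 0 < sigmaSq ν f u)
    (t : ℝ) (N : ℕ)
    (V C S σ : ℝ)
    (hV : V = variance (Yout f) (pfMeasure ν))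
    (hC : C = cov (pfMeasure ν) (Yout f) (Ypf f u))
    (hS : S = SCl ν f u)
    (hσ : σ = Real.sqrt (sigmaSq ν f u)) :
    ∀ ω', 0 < ∑ i ∈ Finset.range N, (W i ω').1 ^ 2 →
      ((Real.sqrt N / σ * (StildeN W N ω' - S) ≤ t ↔
        (N : ℝ) ^ (-(1 : ℝ) / 2) *
          ∑ j ∈ Finset.range N,
            σ⁻¹ * ((W j ω').1 * (W j ω').2 * V -
              (C + t * σ * V / Real.sqrt N) * (W j ω').1 ^ 2) ≤ 0) ∧
      (0 < variance (DeltaN ν f u N t) (pfMeasure ν) →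
        (Real.sqrt N / σ * (StildeN W N ω' - S) ≤ t ↔
          Real.sqrt N *
            (((∑ j ∈ Finset.range N,
                σ⁻¹ * ((W j ω').1 * (W j ω').2 * V -
                  (C + t * σ * V / Real.sqrt N) * (W j ω').1 ^ 2)) / N -
              ∫ ω, DeltaN ν f u N t ω ∂(pfMeasure ν)) /
              Real.sqrt (variance (DeltaN ν f u N t) (pfMeasure ν))) ≤
            t / Real.sqrt (1 + t * nuN ν f u N t /
              (σ * Real.sqrt N * V ^ 2))))) := by
  subst hV hC hS hσ
  intro ω' hQ
  have hN : N ≠ 0 := by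
    rintro rfl
    simp at hQ
  have hNpos : (0 : ℝ) < N := by positivity
  have hσ : 0 < Real.sqrt (sigmaSq ν f u) := Real.sqrt_pos.2 hσpos
  have hc : 0 < (Real.sqrt (sigmaSq ν f u))⁻¹ * variance (Yout f) (pfMeasure ν) :=
    mul_pos (inv_pos.2 hσ) ((variance_nonneg _ _).lt_of_ne' hVar)
  have hcoef : cov (pfMeasure ν) (Yout f) (Ypf f u) +
      t * Real.sqrt (sigmaSq ν f u) * variance (Yout f) (pfMeasure ν) / Real.sqrt N =
      (SCl ν f u + t * Real.sqrt (sigmaSq ν f u) / Real.sqrt N) *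
        variance (Yout f) (pfMeasure ν) := by
    rw [cov_Yout_Ypf_eq hVar]
    ring
  rw [StildeN_eq_div W hN, sqrt_div_mul_sub_le_iff hNpos hσ hQ, hcoef, sum_inv_mul_sub_mul_eq]
  refine ⟨?_, fun hΔ => ?_⟩
  · have hpow : (0 : ℝ) < (N : ℝ) ^ (-(1 : ℝ) / 2) := Real.rpow_pos_of_pos hNpos _
    rw [← mul_assoc, mul_nonpos_iff_of_pos_left (mul_pos hpow hc)]
  · have hvar := variance_DeltaN hf hVar hσpos N t hΔ
    have hw : 0 < 1 + t * nuN ν f u N t / (Real.sqrt (sigmaSq ν f u) * Real.sqrt N *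
        variance (Yout f) (pfMeasure ν) ^ 2) :=
      pos_of_mul_pos_right (hvar ▸ hΔ) (by positivity)
    rw [integral_DeltaN hf hY2 hVar hcent hσpos, hvar, normalized_le_iff hNpos hc hVar hw]

/-- On the event `Σ Y_i² > 0`, the event
`A_t = {(√N/σ)(S̃^u_{N,Cl} − S^u_Cl) ≤ t}` coincides with `{N^{-1/2} Σ_j Δ_{N,j} ≤ 0}`
and, provided `Var(Δ_N) > 0`, also with the normalized event. -/
theorem statement17
    {p : ℕ} {𝒳 : Fin p → Type*} [∀ i, MeasurableSpace (𝒳 i)]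
    (ν : ∀ i, Measure (𝒳 i)) [∀ i, IsProbabilityMeasure (ν i)]
    (f : (∀ i, 𝒳 i) → ℝ) (hf : Measurable f)
    (hY2 : MemLp (Yout f) 2 (pfMeasure ν))
    (hVar : variance (Yout f) (pfMeasure ν) ≠ 0)
    (u : Finset (Fin p))
    {Ω' : Type*} [MeasurableSpace Ω'] (P : Measure Ω') [IsProbabilityMeasure P]
    (W : ℕ → Ω' → ℝ × ℝ)
    (hindep : iIndepFun W P)
    (hident : ∀ i, IdentDistrib (W i) (fun ω => (Yout f ω, Ypf f u ω)) P (pfMeasure ν))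
    (hcent : ∫ ω, Yout f ω ∂(pfMeasure ν) = 0)
    (hσpos : 0 < sigmaSq ν f u)
    (t : ℝ) (N : ℕ) (hN : 1 ≤ N)
    (V C S σ : ℝ)
    (hV : V = variance (Yout f) (pfMeasure ν))
    (hC : C = cov (pfMeasure ν) (Yout f) (Ypf f u))
    (hS : S = SCl ν f u)
    (hσ : σ = Real.sqrt (sigmaSq ν f u)) :
    ∀ ω', 0 < ∑ i ∈ Finset.range N, (W i ω').1 ^ 2 →
      ((Real.sqrt N / σ * (StildeN W N ω' - S) ≤ t ↔
        (N : ℝ) ^ (-(1 : ℝ) / 2) *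
          ∑ j ∈ Finset.range N,
            σ⁻¹ * ((W j ω').1 * (W j ω').2 * V -
              (C + t * σ * V / Real.sqrt N) * (W j ω').1 ^ 2) ≤ 0) ∧
      (0 < variance (DeltaN ν f u N t) (pfMeasure ν) →
        (Real.sqrt N / σ * (StildeN W N ω' - S) ≤ t ↔
          Real.sqrt N *
            (((∑ j ∈ Finset.range N,
                σ⁻¹ * ((W j ω').1 * (W j ω').2 * V -
                  (C + t * σ * V / Real.sqrt N) * (W j ω').1 ^ 2)) / N -
              ∫ ω, DeltaN ν f u N t ω ∂(pfMeasure ν)) /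
              Real.sqrt (variance (DeltaN ν f u N t) (pfMeasure ν))) ≤
            t / Real.sqrt (1 + t * nuN ν f u N t /
              (σ * Real.sqrt N * V ^ 2))))) :=
  statement17_general ν f hf hY2 hVar u W hcent hσpos t N V C S σ hV hC hS hσ

end SobolPaper
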